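/- Let C be a 2-copula and let μ_C be the probability measure on [0,1]² induced by C. Then C is I(-1,1) if, and only if, [u - C(u,v)]·[u' - C(u',v')] ≤ [u' - C(u',v)]·[u - C(u,v')] for all u, v, u', v' in [0,1] with u ≤ u' and v ≤ v'. -/

import Mathlib

/-!
Write `S x = P[-U > x₁, V > x₂]`. The two events in the definition of I(-1,1) intersect to the
event at `x ⊔ x'`, so, `S` being antitone, I(-1,1) says exactly that `S` is log-supermodular on
the lattice `ℝ × ℝ`: `S x * S y ≤ S (x ⊔ y) * S (x ⊓ y)`. The margins of a copula are uniform,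
so lines carry no mass and `S x = u - C u v`, where `(u, v)` is the projection of `(-x₁, x₂)`
onto the unit square; log-supermodularity of this function is the four-point inequality.
-/

open MeasureTheory Set

/-- A (bivariate) 2-copula. -/
structure IsCopula2 (C : ℝ → ℝ → ℝ) : Prop where
  grounded_left : ∀ v ∈ Icc (0:ℝ) 1, C 0 v = 0
  grounded_right : ∀ u ∈ Icc (0:ℝ) 1, C u 0 = 0
  margin_left : ∀ u ∈ Icc (0:ℝ) 1, C u 1 = u
  margin_right : ∀ v ∈ Icc (0:ℝ) 1, C 1 v = v
  twoIncreasing : ∀ u u' v v' : ℝ, u ∈ Icc (0:ℝ) 1 → u' ∈ Icc (0:ℝ) 1 →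
    v ∈ Icc (0:ℝ) 1 → v' ∈ Icc (0:ℝ) 1 → u ≤ u' → v ≤ v' →
    0 ≤ C u' v' - C u' v - C u v' + C u v

/-- A joint law `μ` on `ℝ × ℝ` is increasing according to the direction `(a₁, a₂)`
(the I(α) property): the conditional probability
`P[a₁U > x₁, a₂V > x₂ | a₁U > x₁', a₂V > x₂']` is nondecreasing in `(x₁', x₂')`,
expressed equivalently via the cross-product inequality. -/
def IsIncDir2 (μ : Measure (ℝ × ℝ)) (a₁ a₂ : ℝ) : Prop :=
  ∀ x₁ x₂ x₁' x₂' x₁'' x₂'' : ℝ, x₁' ≤ x₁'' → x₂' ≤ x₂'' →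
    μ {p : ℝ × ℝ | (a₁ * p.1 > x₁ ∧ a₂ * p.2 > x₂) ∧ (a₁ * p.1 > x₁' ∧ a₂ * p.2 > x₂')} *
      μ {p : ℝ × ℝ | a₁ * p.1 > x₁'' ∧ a₂ * p.2 > x₂''} ≤
    μ {p : ℝ × ℝ | (a₁ * p.1 > x₁ ∧ a₂ * p.2 > x₂) ∧ (a₁ * p.1 > x₁'' ∧ a₂ * p.2 > x₂'')} *
      μ {p : ℝ × ℝ | a₁ * p.1 > x₁' ∧ a₂ * p.2 > x₂'}

open scoped ENNReal

/-- Called TP₂ (or MTP₂) in the copula and dependence literature. -/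
def LogSupermodular {α M : Type*} [Lattice α] [Mul M] [LE M] (F : α → M) : Prop :=
  ∀ x y, F x * F y ≤ F (x ⊔ y) * F (x ⊓ y)

theorem logSupermodular_iff_forall_sup_mul_le {α M : Type*} [Lattice α] [CommMonoid M]
    [Preorder M] [MulLeftMono M] {F : α → M} (hF : Antitone F) :
    LogSupermodular F ↔ ∀ x x' x'', x' ≤ x'' → F (x ⊔ x') * F x'' ≤ F (x ⊔ x'') * F x' := by
  constructor
  · intro h x x' x'' hx
    calc F (x ⊔ x') * F x'' ≤ F (x ⊔ x' ⊔ x'') * F ((x ⊔ x') ⊓ x'') := h _ _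
      _ ≤ F (x ⊔ x'') * F x' := by
        rw [sup_assoc, sup_eq_right.mpr hx]
        exact mul_le_mul_right (hF (le_inf le_sup_right hx)) _
  · intro h x y
    simpa only [sup_inf_self] using h x (x ⊓ y) y inf_le_right

theorem logSupermodular_ofReal_iff {α : Type*} [Lattice α] {F : α → ℝ} (hF : ∀ x, 0 ≤ F x) :
    LogSupermodular (fun x => ENNReal.ofReal (F x)) ↔ LogSupermodular F := by
  refine forall₂_congr fun x y => ?_
  rw [← ENNReal.ofReal_mul (hF x), ← ENNReal.ofReal_mul (hF _),
    ENNReal.ofReal_le_ofReal_iff (mul_nonneg (hF _) (hF _))]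

theorem mul_le_mul_min_max {α M : Type*} [LinearOrder α] [CommMonoid M] [Preorder M]
    {s : Set α} {g : α → α → M}
    (hg : ∀ u ∈ s, ∀ v ∈ s, ∀ u' ∈ s, ∀ v' ∈ s, u ≤ u' → v ≤ v' →
      g u v * g u' v' ≤ g u' v * g u v')
    {u v u' v' : α} (hu : u ∈ s) (hv : v ∈ s) (hu' : u' ∈ s) (hv' : v' ∈ s) :
    g u v * g u' v' ≤ g (min u u') (max v v') * g (max u u') (min v v') := by
  rcases le_total u u' with huu | huu <;> rcases le_total v v' with hvv | hvv
  · rw [min_eq_left huu, max_eq_right hvv, max_eq_right huu, min_eq_left hvv, mul_comm (g u v')]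
    exact hg u hu v hv u' hu' v' hv' huu hvv
  · rw [min_eq_left huu, max_eq_left hvv, max_eq_right huu, min_eq_right hvv]
  · rw [min_eq_right huu, max_eq_right hvv, max_eq_left huu, min_eq_left hvv, mul_comm]
  · rw [min_eq_right huu, max_eq_left hvv, max_eq_left huu, min_eq_right hvv, mul_comm,
      mul_comm (g u' v)]
    exact hg u' hu' v' hv' u hu v hv huu hvv

section Survival

variable (μ : Measure (ℝ × ℝ)) (a₁ a₂ : ℝ)

def dirSurvival (x : ℝ × ℝ) : ℝ≥0∞ := μ {p | a₁ * p.1 > x.1 ∧ a₂ * p.2 > x.2}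

theorem antitone_dirSurvival : Antitone (dirSurvival μ a₁ a₂) :=
  fun _ _ h => measure_mono fun _ hp => ⟨h.1.trans_lt hp.1, h.2.trans_lt hp.2⟩

theorem isIncDir2_iff_logSupermodular :
    IsIncDir2 μ a₁ a₂ ↔ LogSupermodular (dirSurvival μ a₁ a₂) := by
  rw [logSupermodular_iff_forall_sup_mul_le (antitone_dirSurvival μ a₁ a₂)]
  simp only [IsIncDir2, dirSurvival, Prod.forall, Prod.mk_le_mk, Prod.mk_sup_mk, gt_iff_lt,
    max_lt_iff, and_and_and_comm, and_imp]

theorem dirSurvival_neg_one_one (x : ℝ × ℝ) :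
    dirSurvival μ (-1) 1 x = μ {p | p.1 < -x.1 ∧ x.2 < p.2} := by
  simp only [dirSurvival, neg_mul, one_mul, gt_iff_lt, lt_neg]

end Survival

def clampUnit (x : ℝ) : ℝ := max 0 (min 1 x)

theorem clampUnit_mem (x : ℝ) : clampUnit x ∈ Icc (0:ℝ) 1 :=
  ⟨le_max_left _ _, max_le zero_le_one (min_le_left _ _)⟩

theorem monotone_clampUnit : Monotone clampUnit :=
  fun _ _ h => max_le_max le_rfl (min_le_min le_rfl h)

theorem clampUnit_of_mem {x : ℝ} (hx : x ∈ Icc (0:ℝ) 1) : clampUnit x = x := by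
  rw [clampUnit, min_eq_right hx.2, max_eq_right hx.1]

theorem lt_iff_le_clampUnit {x a : ℝ} (hx : x ∈ Icc (0:ℝ) 1) (hxa : x ≠ clampUnit a) :
    x < a ↔ x ≤ clampUnit a := by
  unfold clampUnit at hxa ⊢
  grind

theorem lt_iff_clampUnit_lt {x b : ℝ} (hx : x ∈ Icc (0:ℝ) 1) (hxb : x ≠ clampUnit b) :
    b < x ↔ clampUnit b < x := by
  unfold clampUnit at hxb ⊢
  grind

namespace IsCopula2

variable {C : ℝ → ℝ → ℝ} (hC : IsCopula2 C) {u v : ℝ}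
include hC

theorem nonneg (hu : u ∈ Icc (0:ℝ) 1) (hv : v ∈ Icc (0:ℝ) 1) : 0 ≤ C u v := by
  have := hC.twoIncreasing 0 u 0 v unitInterval.zero_mem hu unitInterval.zero_mem hv hu.1 hv.1
  linarith [hC.grounded_right u hu, hC.grounded_left v hv,
    hC.grounded_left 0 unitInterval.zero_mem]

theorem le_left (hu : u ∈ Icc (0:ℝ) 1) (hv : v ∈ Icc (0:ℝ) 1) : C u v ≤ u := by
  have := hC.twoIncreasing 0 u v 1 unitInterval.zero_mem hu hv unitInterval.one_mem hu.1 hv.2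
  linarith [hC.margin_left u hu, hC.grounded_left 1 unitInterval.one_mem, hC.grounded_left v hv]

end IsCopula2

theorem eq_volume_restrict_Icc_of_measure_Icc (ν : Measure ℝ) [IsFiniteMeasure ν]
    (h_ae : ∀ᵐ x ∂ν, x ∈ Icc (0:ℝ) 1)
    (h : ∀ u ∈ Icc (0:ℝ) 1, ν (Icc 0 u) = ENNReal.ofReal u) :
    ν = volume.restrict (Icc 0 1) := by
  rw [← Measure.restrict_eq_self_of_ae_mem h_ae]
  refine Measure.ext_of_Iic _ _ fun t => ?_
  rw [Measure.restrict_apply measurableSet_Iic, Measure.restrict_apply measurableSet_Iic]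
  have hIcc : Iic t ∩ Icc (0:ℝ) 1 = Icc 0 (min t 1) := by
    ext x; simp only [mem_inter_iff, mem_Iic, mem_Icc, le_min_iff]; tauto
  rw [hIcc]
  rcases lt_or_ge t 0 with ht | ht
  · rw [Icc_eq_empty (min_le_left t 1 |>.trans_lt ht).not_ge, measure_empty, measure_empty]
  · rw [h _ ⟨le_min ht zero_le_one, min_le_right _ _⟩, Real.volume_Icc, sub_zero]

theorem ae_ne_of_map_eq_volume_restrict {X : Type*} [MeasurableSpace X] {μ : Measure X}
    {f : X → ℝ} (hf : Measurable f) {s : Set ℝ} (h : μ.map f = volume.restrict s) (t : ℝ) :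
    ∀ᵐ p ∂μ, f p ≠ t := by
  have := measure_singleton (μ := volume.restrict s) t
  rw [← h, Measure.map_apply hf (measurableSet_singleton t)] at this
  exact measure_eq_zero_iff_ae_notMem.1 this

section CopulaMeasure

variable {C : ℝ → ℝ → ℝ} {μ : Measure (ℝ × ℝ)} (hC : IsCopula2 C)
  (hμC : ∀ u ∈ Icc (0:ℝ) 1, ∀ v ∈ Icc (0:ℝ) 1, μ (Icc 0 u ×ˢ Icc 0 v) = ENNReal.ofReal (C u v))
include hC hμC

theorem measure_Icc_prod_Ioc {u v : ℝ} (hu : u ∈ Icc (0:ℝ) 1) (hv : v ∈ Icc (0:ℝ) 1) :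
    μ (Icc 0 u ×ˢ Ioc v 1) = ENNReal.ofReal (u - C u v) := by
  have hunion : Icc 0 u ×ˢ Icc 0 v ∪ Icc 0 u ×ˢ Ioc v 1 = Icc (0:ℝ) u ×ˢ Icc (0:ℝ) 1 := by
    rw [← prod_union, Icc_union_Ioc_eq_Icc hv.1 hv.2]
  have hdisj : Disjoint (Icc (0:ℝ) u ×ˢ Icc 0 v) (Icc 0 u ×ˢ Ioc v 1) :=
    disjoint_prod.2 (Or.inr (disjoint_left.2 fun _ hx hx' => hx'.1.not_ge hx.2))
  have hsplit := measure_union (μ := μ) hdisj (measurableSet_Icc.prod measurableSet_Ioc)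
  rw [hunion, hμC u hu 1 unitInterval.one_mem, hC.margin_left u hu, hμC u hu v hv] at hsplit
  rw [ENNReal.ofReal_sub _ (hC.nonneg hu hv), hsplit,
    ENNReal.add_sub_cancel_left ENNReal.ofReal_ne_top]

variable [IsProbabilityMeasure μ]

theorem ae_mem_unitSquare : ∀ᵐ p ∂μ, p ∈ Icc (0:ℝ) 1 ×ˢ Icc (0:ℝ) 1 := by
  rw [ae_mem_iff_measure_eq (measurableSet_Icc.prod measurableSet_Icc).nullMeasurableSet,
    hμC 1 unitInterval.one_mem 1 unitInterval.one_mem, hC.margin_left 1 unitInterval.one_mem,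
    measure_univ, ENNReal.ofReal_one]

theorem map_fst_eq_volume_restrict : μ.map Prod.fst = volume.restrict (Icc 0 1) := by
  have hS := ae_mem_unitSquare hC hμC
  refine eq_volume_restrict_Icc_of_measure_Icc _
    ((ae_map_iff measurable_fst.aemeasurable measurableSet_Icc).2 (hS.mono fun p hp => hp.1))
    fun u hu => ?_
  rw [Measure.map_apply measurable_fst measurableSet_Icc]
  calc μ (Prod.fst ⁻¹' Icc 0 u) = μ (Icc 0 u ×ˢ Icc 0 1) :=
        measure_congr (Filter.eventuallyEq_set.2 (hS.mono fun p hp => by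
          simp only [mem_preimage, mem_prod, hp.2, and_true]))
    _ = ENNReal.ofReal u := by rw [hμC u hu 1 unitInterval.one_mem, hC.margin_left u hu]

theorem map_snd_eq_volume_restrict : μ.map Prod.snd = volume.restrict (Icc 0 1) := by
  have hS := ae_mem_unitSquare hC hμC
  refine eq_volume_restrict_Icc_of_measure_Icc _
    ((ae_map_iff measurable_snd.aemeasurable measurableSet_Icc).2 (hS.mono fun p hp => hp.2))
    fun v hv => ?_
  rw [Measure.map_apply measurable_snd measurableSet_Icc]
  calc μ (Prod.snd ⁻¹' Icc 0 v) = μ (Icc 0 1 ×ˢ Icc 0 v) :=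
        measure_congr (Filter.eventuallyEq_set.2 (hS.mono fun p hp => by
          simp only [mem_preimage, mem_prod, hp.1, true_and]))
    _ = ENNReal.ofReal v := by rw [hμC 1 unitInterval.one_mem v hv, hC.margin_right v hv]

theorem measure_fst_lt_and_lt_snd (a b : ℝ) :
    μ {p | p.1 < a ∧ b < p.2} =
      ENNReal.ofReal (clampUnit a - C (clampUnit a) (clampUnit b)) := by
  rw [← measure_Icc_prod_Ioc hC hμC (clampUnit_mem a) (clampUnit_mem b)]
  refine measure_congr (Filter.eventuallyEq_set.2 ?_)
  have hfst := ae_ne_of_map_eq_volume_restrict measurable_fst (map_fst_eq_volume_restrict hC hμC)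
  have hsnd := ae_ne_of_map_eq_volume_restrict measurable_snd (map_snd_eq_volume_restrict hC hμC)
  filter_upwards [ae_mem_unitSquare hC hμC, hfst (clampUnit a), hsnd (clampUnit b)]
    with p hp h₁ h₂
  rw [mem_prod] at hp
  simp only [mem_prod, mem_Icc, mem_Ioc, lt_iff_le_clampUnit hp.1 h₁,
    lt_iff_clampUnit_lt hp.2 h₂, hp.1.1, hp.2.2, true_and, and_true]

end CopulaMeasure

theorem copula_I_neg1_1_iff_general (C : ℝ → ℝ → ℝ) (hC : IsCopula2 C)
    (μ : Measure (ℝ × ℝ)) [IsProbabilityMeasure μ]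
    (hμC : ∀ u ∈ Icc (0:ℝ) 1, ∀ v ∈ Icc (0:ℝ) 1,
      μ (Icc 0 u ×ˢ Icc 0 v) = ENNReal.ofReal (C u v)) :
    IsIncDir2 μ (-1) 1 ↔
      ∀ u ∈ Icc (0:ℝ) 1, ∀ v ∈ Icc (0:ℝ) 1, ∀ u' ∈ Icc (0:ℝ) 1, ∀ v' ∈ Icc (0:ℝ) 1,
        u ≤ u' → v ≤ v' →
        (u - C u v) * (u' - C u' v') ≤ (u' - C u' v) * (u - C u v') := by
  have hsurv : dirSurvival μ (-1) 1 =
      fun x => ENNReal.ofReal (clampUnit (-x.1) - C (clampUnit (-x.1)) (clampUnit x.2)) := by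
    funext x
    rw [dirSurvival_neg_one_one, measure_fst_lt_and_lt_snd hC hμC]
  rw [isIncDir2_iff_logSupermodular, hsurv, logSupermodular_ofReal_iff fun x =>
    sub_nonneg.2 (hC.le_left (clampUnit_mem _) (clampUnit_mem _))]
  constructor
  · intro h u hu v hv u' hu' v' hv' huu hvv
    simpa [LogSupermodular, clampUnit_of_mem, hu, hv, hu', hv', huu, hvv] using
      (h (-u, v) (-u', v')).trans_eq (mul_comm _ _)
  · intro h x y
    have := mul_le_mul_min_max (g := fun u v => u - C u v) h (clampUnit_mem (-x.1))
      (clampUnit_mem x.2) (clampUnit_mem (-y.1)) (clampUnit_mem y.2)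
    simpa [← monotone_clampUnit.map_min, ← monotone_clampUnit.map_max, max_neg_neg, min_neg_neg]
      using this

theorem copula_I_neg1_1_iff (C : ℝ → ℝ → ℝ) (hC : IsCopula2 C)
    (μ : Measure (ℝ × ℝ)) [IsProbabilityMeasure μ]
    (hsupp : μ (Icc (0:ℝ) 1 ×ˢ Icc (0:ℝ) 1) = 1)
    (hμC : ∀ u ∈ Icc (0:ℝ) 1, ∀ v ∈ Icc (0:ℝ) 1,
      μ (Icc 0 u ×ˢ Icc 0 v) = ENNReal.ofReal (C u v)) :
    IsIncDir2 μ (-1) 1 ↔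
      ∀ u ∈ Icc (0:ℝ) 1, ∀ v ∈ Icc (0:ℝ) 1, ∀ u' ∈ Icc (0:ℝ) 1, ∀ v' ∈ Icc (0:ℝ) 1,
        u ≤ u' → v ≤ v' →
        (u - C u v) * (u' - C u' v') ≤ (u' - C u' v) * (u - C u v') :=
  copula_I_neg1_1_iff_general C hC μ hμC
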